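/- The transformation 𝒯 preserves and reflects the covariant-contravariant simulation preorder: for each LTS T with signature {A^r, A^l, A^bi} and all states p, q of T, p ≲cc q in T if and only if p ≲cc q in 𝒯(T). -/
import Mathlib


/-- The three kinds of actions in a signature `{A^r, A^l, A^bi}`:
covariant (`A^r`), contravariant (`A^l`) and bivariant (`A^bi`). -/
inductive Kind : Type where
  | cov : Kind
  | con : Kind
  | bi : Kind
deriving DecidableEq

/-- A covariant-contravariant simulation over an LTS with state space `S` and
signature `sig : Act → Kind`. -/
def IsCCSimK {S Act : Type} (sig : Act → Kind) (tr : S → Act → S → Prop)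
    (R : S → S → Prop) : Prop :=
  ∀ p q, R p q →
    ((∀ a, (sig a = Kind.cov ∨ sig a = Kind.bi) →
        ∀ p', tr p a p' → ∃ q', tr q a q' ∧ R p' q') ∧
     (∀ a, (sig a = Kind.con ∨ sig a = Kind.bi) →
        ∀ q', tr q a q' → ∃ p', tr p a p' ∧ R p' q'))

/-- The covariant-contravariant simulation preorder `p ≲cc q` over an LTS with
signature `sig`. -/
def CCLEK {S Act : Type} (sig : Act → Kind) (tr : S → Act → S → Prop) (p q : S) : Prop :=
  ∃ R, IsCCSimK sig tr R ∧ R p q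

/-- The actions of the transformed systems `𝒯(T)`: `Sum.inl a` is an original
action `a ∈ A^r ∪ A^l`, while `Sum.inr (c, true)` is `c^r` and
`Sum.inr (c, false)` is `c^l` for a bivariant action `c ∈ A^bi`. -/
def barSig {Act : Type} (sig : Act → Kind) : Act ⊕ (Act × Bool) → Kind
  | .inl a => if sig a = Kind.con then Kind.con else Kind.cov
  | .inr (_, true) => Kind.cov
  | .inr (_, false) => Kind.con

/-- The transitions of `𝒯(T)`: transitions of `T` labelled in `A^r ∪ A^l` are
kept, and each transition `p →c p'` with `c ∈ A^bi` yields both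
`p →c^r p'` and `p →c^l p'`. -/
def trBar {S Act : Type} (sig : Act → Kind) (tr : S → Act → S → Prop) :
    S → Act ⊕ (Act × Bool) → S → Prop
  | p, .inl a, p' => tr p a p' ∧ (sig a = Kind.cov ∨ sig a = Kind.con)
  | p, .inr (c, _), p' => tr p c p' ∧ sig c = Kind.bi

/-- The transformation `𝒯` preserves and reflects the covariant-contravariant
simulation preorder: for each LTS `T` with signature `{A^r, A^l, A^bi}` and
all states `p`, `q` of `T`, `p ≲cc q` in `T` iff `p ≲cc q` in `𝒯(T)`. -/
theorem tBar_preserves_reflects_ccle {S Act : Type} [Fintype Act]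
    (sig : Act → Kind) (tr : S → Act → S → Prop) (p q : S) :
    CCLEK sig tr p q ↔ CCLEK (barSig sig) (trBar sig tr) p q := by
  constructor
  · rintro ⟨R, hR, hpq⟩
    refine ⟨R, ?_, hpq⟩
    intro x y hxy
    obtain ⟨hcov, hcon⟩ := hR x y hxy
    constructor
    · rintro a ha x' hx
      match a, ha, hx with
      | .inl a, ha, ⟨hx, hk⟩ =>
        have hne : sig a ≠ Kind.con := by
          simp [barSig] at ha; rcases ha with h | h <;> first | exact h | (split at h <;> simp_all)
        have : sig a = Kind.cov := by rcases hk with h | h <;> simp_all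
        obtain ⟨y', hy, hr⟩ := hcov a (Or.inl this) x' hx
        exact ⟨y', ⟨hy, Or.inl this⟩, hr⟩
      | .inr (c, true), ha, ⟨hx, hk⟩ =>
        obtain ⟨y', hy, hr⟩ := hcov c (Or.inr hk) x' hx
        exact ⟨y', ⟨hy, hk⟩, hr⟩
      | .inr (c, false), ha, ⟨hx, hk⟩ => simp [barSig] at ha
    · rintro a ha y' hy
      match a, ha, hy with
      | .inl a, ha, ⟨hy, hk⟩ =>
        have hc : sig a = Kind.con := by
          simp [barSig] at ha; rcases ha with h | h <;> first | exact h | (split at h <;> simp_all)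
        obtain ⟨x', hx, hr⟩ := hcon a (Or.inl hc) y' hy
        exact ⟨x', ⟨hx, Or.inr hc⟩, hr⟩
      | .inr (c, false), ha, ⟨hy, hk⟩ =>
        obtain ⟨x', hx, hr⟩ := hcon c (Or.inr hk) y' hy
        exact ⟨x', ⟨hx, hk⟩, hr⟩
      | .inr (c, true), ha, ⟨hy, hk⟩ => simp [barSig] at ha
  · rintro ⟨R, hR, hpq⟩
    refine ⟨R, ?_, hpq⟩
    intro x y hxy
    obtain ⟨hcov, hcon⟩ := hR x y hxy
    constructor
    · rintro a ha x' hx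
      rcases ha with h | h
      · obtain ⟨y', ⟨hy, _⟩, hr⟩ :=
          hcov (.inl a) (Or.inl (by simp [barSig, h])) x' ⟨hx, Or.inl h⟩
        exact ⟨y', hy, hr⟩
      · obtain ⟨y', ⟨hy, _⟩, hr⟩ :=
          hcov (.inr (a, true)) (Or.inl rfl) x' ⟨hx, h⟩
        exact ⟨y', hy, hr⟩
    · rintro a ha y' hy
      rcases ha with h | h
      · obtain ⟨x', ⟨hx, _⟩, hr⟩ :=
          hcon (.inl a) (Or.inl (by simp [barSig, h])) y' ⟨hy, Or.inr h⟩
        exact ⟨x', hx, hr⟩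
      · obtain ⟨x', ⟨hx, _⟩, hr⟩ :=
          hcon (.inr (a, false)) (Or.inl rfl) y' ⟨hy, h⟩
        exact ⟨x', hx, hr⟩
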